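/- arXiv:math/0404307 — 7 statements merged into one kernel-verified Lean document; each statement's English description precedes it below -/
import Mathlib

section
/- Let N = 2n+1 with n a nonnegative integer, s = −exp(πi/N), q = s², let k be an integer with 0 ≤ k ≤ n, and set m = n − k. Then ∏_{j=1}^{m} (1 − s^{4j−4m−2})/(1 + s^{4j−2m−1}) = s^{−m(m+1)/2} · ∏_{j=0}^{m−1} (1 − q^{n−j}); in particular all denominators 1 + s^{4j−2m−1} are nonzero. -/
open Complex

open Finset
section aux

variable (n : ℕ) (s : ℂ)

lemma aux_sN (hs : s = -Complex.exp (Real.pi * Complex.I / (2 * n + 1))) :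
    s ^ (2*n+1) = 1 := by
  have hN : (2 * (n:ℂ) + 1) ≠ 0 := by
    have h0 : ((2*n+1 : ℕ) : ℂ) ≠ 0 := Nat.cast_ne_zero.mpr (by omega)
    push_cast at h0; exact h0
  rw [hs, neg_pow, ← Complex.exp_nat_mul]
  have h2 : ((2*n+1:ℕ):ℂ) * (Real.pi * Complex.I / (2 * n + 1)) = Real.pi * Complex.I := by
    push_cast
    field_simp
  rw [h2, Complex.exp_pi_mul_I, pow_succ, pow_mul, neg_one_sq, one_pow, one_mul,
    mul_neg, mul_one, neg_neg]

lemma aux_prim (hs : s = -Complex.exp (Real.pi * Complex.I / (2 * n + 1))) :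
    IsPrimitiveRoot (s^2) (2*n+1) := by
  have h := Complex.isPrimitiveRoot_exp (2*n+1) (Nat.succ_ne_zero _)
  have h2 : s^2 = Complex.exp (2 * Real.pi * Complex.I / (2*n+1)) := by
    rw [hs, neg_pow, neg_one_sq, one_mul, ← Complex.exp_nat_mul]
    ring_nf
  rw [h2]
  convert h using 2
  push_cast
  ring

lemma aux_ne_neg_one (hs : s = -Complex.exp (Real.pi * Complex.I / (2 * n + 1)))
    (e : ℕ) : (s^2) ^ e ≠ -1 := by
  intro h
  have hprim := aux_prim n s hs
  have h2 : (s^2) ^ (2*e) = 1 := by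
    rw [mul_comm 2 e, pow_mul, h]; norm_num
  have hdvd : (2*n+1) ∣ 2*e := (IsPrimitiveRoot.pow_eq_one_iff_dvd hprim (2*e)).mp h2
  have hodd : Nat.Coprime (2*n+1) 2 := by
    exact Nat.coprime_two_right.mpr ⟨n, by omega⟩
  have hdvd2 : (2*n+1) ∣ e := hodd.dvd_of_dvd_mul_left hdvd
  have h3 : (s^2) ^ e = 1 := (IsPrimitiveRoot.pow_eq_one_iff_dvd hprim e).mpr hdvd2
  rw [h3] at h
  norm_num at h

lemma aux_s_ne_zero (hs : s = -Complex.exp (Real.pi * Complex.I / (2 * n + 1))) :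
    s ≠ 0 := by
  intro h0
  have := aux_sN n s hs
  rw [h0] at this
  simp at this

-- congruence: zpow to nat pow
lemma aux_cong (hs : s = -Complex.exp (Real.pi * Complex.I / (2 * n + 1)))
    (a : ℤ) (b : ℕ) (h : ((2*n+1:ℕ):ℤ) ∣ ((b:ℤ) - a)) : s ^ a = s ^ b := by
  have hs0 := aux_s_ne_zero n s hs
  have hsN := aux_sN n s hs
  obtain ⟨t, ht⟩ := h
  have ha : a = (b:ℤ) - ((2*n+1:ℕ):ℤ) * t := by omega
  rw [ha, zpow_sub₀ hs0, zpow_mul, zpow_natCast, zpow_natCast, hsN, one_zpow, div_one]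

end aux

lemma key (n : ℕ) (s : ℂ) (hsN : s ^ (2*n+1) = 1) :
    ∀ m k : ℕ, k + m = n →
      ∏ j ∈ range m, (1 + (s^2) ^ (k+2+2*j))
        = s ^ (m*(m+1)/2) * ∏ j ∈ range m, (1 + (s^2) ^ (k+1+j)) := by
  intro m
  induction m with
  | zero => simp
  | succ M ih =>
    intro k hkm
    have hqN : (s^2) ^ (2*n+1) = 1 := by
      rw [← pow_mul, mul_comm 2 (2*n+1), pow_mul, hsN, one_pow]
    have step1 : ∀ j ∈ range (M+1),
        (1 + (s^2) ^ (k+2+2*j))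
          = (s^2) ^ (k+2+2*j) * (1 + (s^2) ^ (k+1+2*(M-j))) := by
      intro j hj
      have hj' : j < M + 1 := mem_range.mp hj
      have hadd : (k+2+2*j) + (k+1+2*(M-j)) = 2*n+1 := by omega
      have h1 : (s^2) ^ (k+2+2*j) * (s^2) ^ (k+1+2*(M-j)) = 1 := by
        rw [← pow_add, hadd, hqN]
      rw [mul_add, mul_one, h1, add_comm]
    rw [Finset.prod_congr rfl step1, Finset.prod_mul_distrib]
    have sum1 : ∏ j ∈ range (M+1), (s^2) ^ (k+2+2*j) = s ^ (M+1) := by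
      rw [Finset.prod_pow_eq_pow_sum]
      have hg := Finset.sum_range_id_mul_two (M+1)
      have hsum : ∑ j ∈ range (M+1), (k+2+2*j) = (M+1)*(n+1) := by
        rw [Finset.sum_add_distrib, Finset.sum_const, ← Finset.mul_sum]
        simp only [card_range, smul_eq_mul, Nat.add_sub_cancel] at hg ⊢
        have h2 : 2 * ∑ j ∈ range (M+1), j = (M+1)*M := by omega
        rw [h2, ← hkm]
        ring
      rw [hsum, ← pow_mul]
      have he : 2 * ((M+1)*(n+1)) = (2*n+1)*(M+1) + (M+1) := by ring
      rw [he, pow_add, pow_mul, hsN, one_pow, one_mul]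
    rw [sum1]
    have refl1 : ∏ j ∈ range (M+1), (1 + (s^2) ^ (k+1+2*(M-j)))
        = ∏ j ∈ range (M+1), (1 + (s^2) ^ (k+1+2*j)) := by
      have h := Finset.prod_range_reflect (fun j => 1 + (s^2) ^ (k+1+2*j)) (M+1)
      simp only [Nat.add_sub_cancel] at h
      exact h
    rw [refl1]
    have peel : ∏ j ∈ range (M+1), (1 + (s^2) ^ (k+1+2*j))
        = (∏ j ∈ range M, (1 + (s^2) ^ ((k+1)+2+2*j))) * (1 + (s^2)^(k+1+2*0)) := by
      rw [Finset.prod_range_succ']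
      congr 1
      apply Finset.prod_congr rfl; intro j hj; congr 2; omega
    rw [peel, ih (k+1) (by omega)]
    have peel2 : ∏ j ∈ range (M+1), (1 + (s^2) ^ (k+1+j))
        = (∏ j ∈ range M, (1 + (s^2) ^ ((k+1)+1+j))) * (1 + (s^2)^(k+1+0)) := by
      rw [Finset.prod_range_succ']
      congr 1
      apply Finset.prod_congr rfl; intro j hj; congr 2; omega
    rw [peel2]
    have hpow : s ^ (M+1) * s ^ (M*(M+1)/2) = s ^ ((M+1)*(M+2)/2) := by
      rw [← pow_add]; congr 1
      have e1 : M*(M+1)/2*2 = M*(M+1) := Nat.div_mul_cancel (Nat.even_mul_succ_self M).two_dvd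
      have e2 : (M+1)*(M+2)/2*2 = (M+1)*(M+2) := by
        exact Nat.div_mul_cancel (Nat.even_mul_succ_self (M+1)).two_dvd
      have e3 : (M+1)*(M+2) = M*(M+1) + 2*(M+1) := by ring
      omega
    rw [← hpow]
    ring

/-- The product simplification at the root of unity `s = q^{1/2} = −exp(πi/N)`,
`N = 2n+1`, `m = n − k` (`0 ≤ k ≤ n`):
`∏_{j=1}^{m} (1 − s^{4j−4m−2})/(1 + s^{4j−2m−1}) = s^{−m(m+1)/2} ∏_{j=0}^{m−1} (1 − q^{n−j})`,
and in particular all the denominators `1 + s^{4j−2m−1}` are nonzero. -/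
theorem root_of_unity_product_simplification (n k : ℕ) (hk : k ≤ n) (m : ℕ) (hm : m = n - k)
    (s : ℂ) (hs : s = -Complex.exp (Real.pi * Complex.I / (2 * n + 1)))
    (q : ℂ) (hq : q = s ^ 2) :
    (∀ j : ℕ, 1 ≤ j → j ≤ m → 1 + s ^ (4 * (j : ℤ) - 2 * (m : ℤ) - 1) ≠ 0) ∧
    ∏ j ∈ Finset.range m,
        (1 - s ^ (4 * ((j : ℤ) + 1) - 4 * (m : ℤ) - 2)) /
          (1 + s ^ (4 * ((j : ℤ) + 1) - 2 * (m : ℤ) - 1))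
      = s ^ (-(((m : ℤ) * ((m : ℤ) + 1)) / 2)) *
          ∏ j ∈ Finset.range m, (1 - q ^ (n - j)) := by
  subst hq
  have hkm : k + m = n := by omega
  have hs0 := aux_s_ne_zero n s hs
  have hden : ∀ e : ℕ, (1 : ℂ) + (s^2) ^ e ≠ 0 := by
    intro e h
    exact aux_ne_neg_one n s hs e (by linear_combination h)
  constructor
  · intro j h1 h2
    have hc : s ^ (4 * (j : ℤ) - 2 * (m : ℤ) - 1) = s ^ (2*(2*j+k)) :=
      aux_cong n s hs _ _ ⟨1, by push_cast; omega⟩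
    rw [hc, pow_mul]
    exact hden (2*j+k)
  · have hfac : ∀ j ∈ range m,
        (1 - s ^ (4 * ((j : ℤ) + 1) - 4 * (m : ℤ) - 2)) /
          (1 + s ^ (4 * ((j : ℤ) + 1) - 2 * (m : ℤ) - 1))
        = ((1 - (s^2) ^ (k+1+j)) * (1 + (s^2) ^ (k+1+j))) / (1 + (s^2) ^ (k+2+2*j)) := by
      intro j hj
      have hj' : j < m := mem_range.mp hj
      have hnum : s ^ (4 * ((j : ℤ) + 1) - 4 * (m : ℤ) - 2) = s ^ (2*(2*(k+1+j))) :=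
        aux_cong n s hs _ _ ⟨2, by push_cast; omega⟩
      have hde : s ^ (4 * ((j : ℤ) + 1) - 2 * (m : ℤ) - 1) = s ^ (2*(k+2+2*j)) :=
        aux_cong n s hs _ _ ⟨1, by push_cast; omega⟩
      rw [hnum, hde, pow_mul, pow_mul, pow_mul]
      ring
    rw [Finset.prod_congr rfl hfac, Finset.prod_div_distrib, Finset.prod_mul_distrib]
    rw [key n s (aux_sN n s hs) m k hkm]
    -- RHS power
    have hTev : m*(m+1) = 2*(m*(m+1)/2) := (Nat.div_mul_cancel (Nat.even_mul_succ_self m).two_dvd).symm ▸ by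
      omega
    have h2 : ((m:ℤ) * ((m:ℤ)+1)) = 2*((m*(m+1)/2 : ℕ) : ℤ) := by exact_mod_cast hTev
    have hz : (-(((m : ℤ) * ((m : ℤ) + 1)) / 2)) = -(((m*(m+1)/2 : ℕ)):ℤ) := by
      rw [h2]; omega
    rw [hz, zpow_neg, zpow_natCast]
    have hrefl : ∏ j ∈ range m, (1 - (s^2)^(n-j)) = ∏ j ∈ range m, (1 - (s^2)^(k+1+j)) := by
      have h := Finset.prod_range_reflect (fun j => 1 - (s^2)^(k+1+j)) m
      rw [← h]
      apply Finset.prod_congr rfl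
      intro j hj
      have hj' : j < m := mem_range.mp hj
      congr 2
      omega
    rw [hrefl]
    have hB : ∏ j ∈ range m, (1 + (s^2)^(k+1+j)) ≠ 0 :=
      Finset.prod_ne_zero_iff.mpr (fun j _ => hden _)
    have hsT : s ^ (m*(m+1)/2) ≠ 0 := pow_ne_zero _ hs0
    field_simp
end

section
/- Let N = 2n+1 with n a nonnegative integer, s = −exp(πi/N), q = s² = exp(2πi/N), and let l be an integer with 2l ≡ n (mod N). Then ∑_{j=0}^{N−1} q^{j²} = q^{l²} · ∏_{j=1}^{n} (1 − q^{j}). -/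
/-!
Gauss's identity `∑ₖ (-1)ᵏ [2n, k]_r = ∏_{j<n} (1 - r^(2j+1))` follows from the `q`-Pascal rule and
the absorption rule `(1 - r^(k+1)) [m+1, k+1]_r = (1 - r^(m+1)) [m, k]_r`, which together give
`g(m+2) = (1 - r^(m+1)) g(m)` for the alternating sums `g(m) = ∑ₖ (-1)ᵏ [m, k]_r`.

At a primitive `(2n+1)`-th root of unity `r` the absorption rule makes `[2n+1, k+1]_r` vanish
for `k < 2n`, so Pascal gives `[2n, k+1]_r = -r^(-(k+1)) [2n, k]_r` and `(-1)ᵏ [2n, k]_r = r^(-k(k+1)/2)`.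
For `r = q^n` this is `q^((2lk+l)² - l²)`, and `k ↦ 2lk+l` permutes `ZMod (2n+1)` because `2l`
is a unit; so the alternating sum is `q^(-l²)` times the Gauss sum. On the product side
`r^(2j+1) = q^(n-j)`.
-/

open Complex Finset

section QBinomial

variable {R : Type*} [CommRing R] (r : R)

def qPochhammer (m : ℕ) : R := ∏ i ∈ range m, (1 - r ^ (i + 1))

def qBinomial : ℕ → ℕ → R
  | _, 0 => 1
  | 0, _ + 1 => 0
  | m + 1, k + 1 => qBinomial m k + r ^ (k + 1) * qBinomial m (k + 1)

@[simp] lemma qPochhammer_zero : qPochhammer r 0 = 1 := prod_range_zero _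

lemma qPochhammer_succ (m : ℕ) : qPochhammer r (m + 1) = qPochhammer r m * (1 - r ^ (m + 1)) :=
  prod_range_succ _ _

@[simp] lemma qBinomial_zero_right (m : ℕ) : qBinomial r m 0 = 1 := by cases m <;> rfl

lemma qBinomial_succ_succ (m k : ℕ) :
    qBinomial r (m + 1) (k + 1) = qBinomial r m k + r ^ (k + 1) * qBinomial r m (k + 1) := rfl

lemma qBinomial_eq_zero_of_lt : ∀ {m k : ℕ}, m < k → qBinomial r m k = 0
  | 0, _ + 1, _ => rfl
  | m + 1, k + 1, h => by
    rw [qBinomial_succ_succ, qBinomial_eq_zero_of_lt (by omega),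
      qBinomial_eq_zero_of_lt (by omega), mul_zero, add_zero]

lemma qBinomial_mul_qPochhammer_mul_qPochhammer : ∀ {m k : ℕ}, k ≤ m →
    qBinomial r m k * qPochhammer r k * qPochhammer r (m - k) = qPochhammer r m
  | m, 0, _ => by simp
  | m + 1, k + 1, h => by
    rcases Nat.lt_or_eq_of_le (Nat.le_of_succ_le_succ h) with hk | rfl
    · obtain ⟨t, rfl⟩ : ∃ t, m = k + 1 + t := ⟨m - (k + 1), by omega⟩
      have ih₁ := qBinomial_mul_qPochhammer_mul_qPochhammer (m := k + 1 + t) (k := k) (by omega)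
      have ih₂ := qBinomial_mul_qPochhammer_mul_qPochhammer (m := k + 1 + t) (k := k + 1) (by omega)
      rw [show k + 1 + t - k = t + 1 by omega] at ih₁
      rw [show k + 1 + t - (k + 1) = t by omega] at ih₂
      rw [show k + 1 + t + 1 - (k + 1) = t + 1 by omega, qBinomial_succ_succ,
        qPochhammer_succ r (k + 1 + t)]
      simp only [qPochhammer_succ r k, qPochhammer_succ r t] at ih₁ ih₂ ⊢
      linear_combination (1 - r ^ (k + 1)) * ih₁ + r ^ (k + 1) * (1 - r ^ (t + 1)) * ih₂
    · have ih := qBinomial_mul_qPochhammer_mul_qPochhammer (m := k) (k := k) le_rfl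
      rw [Nat.sub_self, qPochhammer_zero, mul_one] at ih
      rw [qBinomial_succ_succ, qBinomial_eq_zero_of_lt r (Nat.lt_succ_self k), Nat.sub_self,
        qPochhammer_zero, qPochhammer_succ]
      linear_combination (1 - r ^ (k + 1)) * ih

variable {r}

lemma qPochhammer_ne_zero_of_le {m k : ℕ} (hkm : k ≤ m) (hm : qPochhammer r m ≠ 0) :
    qPochhammer r k ≠ 0 := by
  rw [← qBinomial_mul_qPochhammer_mul_qPochhammer r hkm] at hm
  exact right_ne_zero_of_mul (left_ne_zero_of_mul hm)

lemma sum_neg_one_pow_mul_qBinomial_succ (m : ℕ) :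
    ∑ k ∈ range (m + 2), (-1) ^ k * qBinomial r (m + 1) k
      = ∑ k ∈ range (m + 1), (-1) ^ k * (r ^ k - 1) * qBinomial r m k := by
  have hshift : ∑ k ∈ range (m + 1), (-1) ^ (k + 1) * r ^ (k + 1) * qBinomial r m (k + 1) + 1
      = ∑ k ∈ range (m + 1), (-1) ^ k * r ^ k * qBinomial r m k := by
    have h := sum_range_succ' (fun k => (-1) ^ k * r ^ k * qBinomial r m k) (m + 1)
    rw [sum_range_succ, qBinomial_eq_zero_of_lt r m.lt_succ_self, mul_zero, add_zero] at h
    simp [h]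
  rw [sum_range_succ', qBinomial_zero_right]
  simp only [qBinomial_succ_succ, mul_add, sum_add_distrib, ← mul_assoc, pow_zero, mul_one]
  rw [add_assoc, hshift, ← sum_add_distrib]
  exact sum_congr rfl fun k _ => by ring

variable [IsDomain R]

lemma qPochhammer_ne_zero_of_isPrimitiveRoot {m N : ℕ} (hr : IsPrimitiveRoot r N) (hm : m < N) :
    qPochhammer r m ≠ 0 :=
  prod_ne_zero_iff.2 fun i hi =>
    sub_ne_zero.2 (hr.pow_ne_one_of_pos_of_lt i.succ_ne_zero (by simp at hi; omega)).symm

lemma one_sub_pow_mul_qBinomial_succ_succ {m : ℕ} (hm : qPochhammer r m ≠ 0) (k : ℕ) :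
    (1 - r ^ (k + 1)) * qBinomial r (m + 1) (k + 1) = (1 - r ^ (m + 1)) * qBinomial r m k := by
  rcases le_or_gt k m with hk | hk
  · have h₁ := qBinomial_mul_qPochhammer_mul_qPochhammer r hk
    have h₂ := qBinomial_mul_qPochhammer_mul_qPochhammer r (m := m + 1) (k := k + 1) (by omega)
    rw [Nat.add_sub_add_right, qPochhammer_succ, qPochhammer_succ] at h₂
    have hne : qPochhammer r k * qPochhammer r (m - k) ≠ 0 := by
      rw [← h₁, mul_assoc] at hm
      exact right_ne_zero_of_mul hm
    apply mul_right_cancel₀ hne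
    linear_combination h₂ - (1 - r ^ (m + 1)) * h₁
  · rw [qBinomial_eq_zero_of_lt r hk, qBinomial_eq_zero_of_lt r (Nat.succ_lt_succ hk),
      mul_zero, mul_zero]

lemma sum_neg_one_pow_mul_qBinomial_add_two {m : ℕ} (hm : qPochhammer r m ≠ 0) :
    ∑ k ∈ range (m + 3), (-1) ^ k * qBinomial r (m + 2) k
      = (1 - r ^ (m + 1)) * ∑ k ∈ range (m + 1), (-1) ^ k * qBinomial r m k := by
  rw [sum_neg_one_pow_mul_qBinomial_succ, sum_range_succ', mul_sum]
  simp only [pow_zero, sub_self, mul_zero, zero_mul, add_zero]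
  refine sum_congr rfl fun k _ => ?_
  linear_combination (-1) ^ k * one_sub_pow_mul_qBinomial_succ_succ hm k

theorem sum_neg_one_pow_mul_qBinomial_two_mul {n : ℕ} (h : qPochhammer r (2 * n) ≠ 0) :
    ∑ k ∈ range (2 * n + 1), (-1) ^ k * qBinomial r (2 * n) k
      = ∏ j ∈ range n, (1 - r ^ (2 * j + 1)) := by
  induction n with
  | zero => simp
  | succ n ih =>
    rw [show 2 * (n + 1) = 2 * n + 2 by ring,
      sum_neg_one_pow_mul_qBinomial_add_two (qPochhammer_ne_zero_of_le (by omega) h),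
      prod_range_succ, ih (qPochhammer_ne_zero_of_le (by omega) h), mul_comm]

end QBinomial

section RootOfUnity

variable {K : Type*} [Field K] {r : K} {m : ℕ}

lemma qBinomial_succ_right_of_isPrimitiveRoot (hr : IsPrimitiveRoot r (m + 1)) {k : ℕ}
    (hk : k < m) : qBinomial r m (k + 1) = -(r ^ (k + 1))⁻¹ * qBinomial r m k := by
  have hvanish : qBinomial r (m + 1) (k + 1) = 0 := by
    have h := one_sub_pow_mul_qBinomial_succ_succ
      (qPochhammer_ne_zero_of_isPrimitiveRoot hr m.lt_succ_self) k
    rw [hr.pow_eq_one, sub_self, zero_mul] at h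
    exact (mul_eq_zero.1 h).resolve_left
      (sub_ne_zero.2 (hr.pow_ne_one_of_pos_of_lt k.succ_ne_zero (by omega)).symm)
  rw [qBinomial_succ_succ] at hvanish
  have : r ^ (k + 1) ≠ 0 := pow_ne_zero _ (hr.ne_zero m.succ_ne_zero)
  field_simp
  linear_combination hvanish

lemma neg_one_pow_mul_qBinomial_of_isPrimitiveRoot (hr : IsPrimitiveRoot r (m + 1)) {k : ℕ}
    (hk : k ≤ m) : (-1) ^ k * qBinomial r m k = ∏ i ∈ range k, (r ^ (i + 1))⁻¹ := by
  induction k with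
  | zero => simp
  | succ k ih =>
    rw [qBinomial_succ_right_of_isPrimitiveRoot hr hk, prod_range_succ, ← ih (by omega)]
    ring

end RootOfUnity

lemma ZMod.sum_range_natCast {M : Type*} [AddCommMonoid M] (N : ℕ) [NeZero N]
    (f : ZMod N → M) : ∑ k ∈ range N, f k = ∑ x, f x :=
  sum_nbij' (↑) ZMod.val (fun _ _ => mem_univ _) (fun x _ => mem_range.2 x.val_lt)
    (fun _ hk => ZMod.val_cast_of_lt (mem_range.1 hk)) (fun x _ => ZMod.natCast_zmod_val x)
    (fun _ _ => rfl)

lemma ZMod.sum_range_mul_natCast_add {M : Type*} [AddCommMonoid M] (N : ℕ) [NeZero N]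
    (f : ZMod N → M) {a : ZMod N} (ha : IsUnit a) (b : ZMod N) :
    ∑ k ∈ range N, f (a * k + b) = ∑ x, f x := by
  rw [ZMod.sum_range_natCast N fun x => f (a * x + b)]
  exact Fintype.sum_bijective _
    ((Equiv.addRight b).bijective.comp (Units.mulLeft_bijective ha.unit)) _ _ fun _ => rfl

section GaussSum

variable {K : Type*} [Field K] {n : ℕ} (ψ : AddChar (ZMod (2 * n + 1)) K)

lemma addChar_sq_mul_prod_inv_pow {l : ZMod (2 * n + 1)} (hl : 2 * l = n) (k : ℕ) :
    ψ (l ^ 2) * ∏ i ∈ range k, (ψ n ^ (i + 1))⁻¹ = ψ ((2 * l * k + l) ^ 2) := by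
  have hN : (2 : ZMod (2 * n + 1)) * n + 1 = 0 := by exact_mod_cast ZMod.natCast_self (2 * n + 1)
  induction k with
  | zero => simp
  | succ k ih =>
    rw [prod_range_succ, ← mul_assoc, ih, ← AddChar.map_nsmul_eq_pow, ← AddChar.map_neg_eq_inv,
      ← AddChar.map_add_eq_mul, nsmul_eq_mul]
    congr 1
    push_cast
    -- `8 l ^ 2 = -n`, because `4 l = 2 n = -1`
    linear_combination (-(k + 1) * n : ZMod (2 * n + 1)) * hN - 2 * (k + 1) * (2 * l + n) * hl

theorem sum_addChar_sq_eq_mul_prod (hψ : IsPrimitiveRoot (ψ 1) (2 * n + 1))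
    {l : ZMod (2 * n + 1)} (hl : 2 * l = n) :
    ∑ x, ψ (x ^ 2) = ψ (l ^ 2) * ∏ j ∈ range n, (1 - ψ 1 ^ (j + 1)) := by
  have hN : (2 : ZMod (2 * n + 1)) * n + 1 = 0 := by exact_mod_cast ZMod.natCast_self (2 * n + 1)
  have hr : IsPrimitiveRoot (ψ n) (2 * n + 1) := by
    rw [← nsmul_one, AddChar.map_nsmul_eq_pow]
    exact hψ.pow_of_coprime n (by simp)
  have hunit : IsUnit (2 * l) := IsUnit.of_mul_eq_one (-2) (by linear_combination -2 * hl - hN)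
  calc ∑ x, ψ (x ^ 2) = ∑ k ∈ range (2 * n + 1), ψ ((2 * l * k + l) ^ 2) :=
        (ZMod.sum_range_mul_natCast_add _ (fun x => ψ (x ^ 2)) hunit l).symm
    _ = ψ (l ^ 2) * ∑ k ∈ range (2 * n + 1), (-1) ^ k * qBinomial (ψ n) (2 * n) k := by
        rw [mul_sum]
        refine sum_congr rfl fun k hk => ?_
        rw [neg_one_pow_mul_qBinomial_of_isPrimitiveRoot hr (by simp at hk; omega),
          addChar_sq_mul_prod_inv_pow ψ hl]
    _ = ψ (l ^ 2) * ∏ j ∈ range n, (1 - ψ n ^ (2 * j + 1)) := by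
        rw [sum_neg_one_pow_mul_qBinomial_two_mul
          (qPochhammer_ne_zero_of_isPrimitiveRoot hr (by omega))]
    _ = ψ (l ^ 2) * ∏ j ∈ range n, (1 - ψ 1 ^ (j + 1)) := by
        rw [← prod_range_reflect (fun j => 1 - ψ 1 ^ (j + 1))]
        refine congrArg _ (prod_congr rfl fun j hj => ?_)
        rw [mem_range] at hj
        rw [← AddChar.map_nsmul_eq_pow, ← AddChar.map_nsmul_eq_pow, nsmul_eq_mul, nsmul_one,
          show n - 1 - j + 1 = n - j by omega, Nat.cast_sub hj.le]
        congr 2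
        push_cast
        linear_combination (j : ZMod (2 * n + 1)) * hN

end GaussSum

/-- The identity `∑_{j=0}^{N−1} q^{j²} = q^{l²} ∏_{j=1}^{n} (1 − q^{j})` for
`N = 2n+1`, `s = −exp(πi/N)`, `q = s² = exp(2πi/N)`, and any integer `l`
with `2l ≡ n (mod N)`. -/
theorem gauss_sum_product_identity (n : ℕ) (l : ℤ)
    (hl : ((2 * n + 1 : ℕ) : ℤ) ∣ (2 * l - (n : ℤ)))
    (s : ℂ) (hs : s = -Complex.exp (Real.pi * Complex.I / (2 * n + 1)))
    (q : ℂ) (hq : q = s ^ 2) :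
    ∑ j ∈ Finset.range (2 * n + 1), q ^ (j ^ 2)
      = q ^ (l ^ 2) * ∏ j ∈ Finset.range n, (1 - q ^ (j + 1)) := by
  have hqexp : q = exp (2 * Real.pi * I / (2 * n + 1 : ℕ)) := by
    rw [hq, hs, neg_sq, ← exp_nat_mul]
    push_cast
    ring_nf
  have hψ : ZMod.stdAddChar (N := 2 * n + 1) 1 = q := by
    simpa [hqexp] using ZMod.stdAddChar_coe (N := 2 * n + 1) 1
  have hl' : 2 * (l : ZMod (2 * n + 1)) = n := by
    have := (ZMod.intCast_eq_intCast_iff_dvd_sub (n : ℤ) (2 * l) (2 * n + 1)).2 hl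
    push_cast at this
    exact this.symm
  have hprim : IsPrimitiveRoot (ZMod.stdAddChar (N := 2 * n + 1) 1) (2 * n + 1) := by
    rw [hψ, hqexp]
    exact isPrimitiveRoot_exp _ (by omega)
  rw [← hψ]
  convert sum_addChar_sq_eq_mul_prod _ hprim hl' using 1
  · rw [← ZMod.sum_range_natCast]
    refine sum_congr rfl fun j _ => ?_
    rw [← AddChar.map_nsmul_eq_pow, nsmul_one, Nat.cast_pow]
  · rw [← AddChar.map_zsmul_eq_zpow, zsmul_one, Int.cast_pow]
end

section
/- Let 𝓑₁ be the group with presentation ⟨T, X, Y | TXT = X⁻¹, TY⁻¹T = Y, Y⁻¹X⁻¹YXT² = 1⟩, and let G = ⟨A, B, C | A² = 1, B² = 1, C² = 1⟩ be the free product of three copies of the cyclic group of order 2. Then the assignment A ↦ XT, B ↦ T⁻¹Y, C ↦ XTY extends to a group isomorphism G ≅ 𝓑₁, whose inverse is determined by T ↦ ACB, X ↦ ABCA, Y ↦ AC. -/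
/-- Generators of the group `𝓑₁` (the elliptic braid group at `q = 1`). -/
inductive B1Gen : Type
  | T | X | Y

open FreeGroup in
/-- Relations of `𝓑₁`: `TXT = X⁻¹`, `TY⁻¹T = Y`, `Y⁻¹X⁻¹YXT² = 1`. -/
def B1Rels : Set (FreeGroup B1Gen) :=
  { of B1Gen.T * of B1Gen.X * of B1Gen.T * of B1Gen.X,
    of B1Gen.T * (of B1Gen.Y)⁻¹ * of B1Gen.T * (of B1Gen.Y)⁻¹,
    (of B1Gen.Y)⁻¹ * (of B1Gen.X)⁻¹ * of B1Gen.Y * of B1Gen.X * of B1Gen.T * of B1Gen.T }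

/-- The group `𝓑₁`. -/
abbrev B1 : Type := PresentedGroup B1Rels

/-- Generators of the free product of three copies of `ℤ/2`. -/
inductive TriGen : Type
  | A | B | C

open FreeGroup in
/-- Relations: `A² = B² = C² = 1`. -/
def TriRels : Set (FreeGroup TriGen) :=
  { of TriGen.A * of TriGen.A, of TriGen.B * of TriGen.B, of TriGen.C * of TriGen.C }

/-- The free product `⟨A, B, C | A² = B² = C² = 1⟩` of three copies of `ℤ/2`. -/
abbrev TriInv : Type := PresentedGroup TriRels

/-!
Writing `a = XT` and `b = T⁻¹Y`, the relations of `𝓑₁` become `a² = b² = (aTb)² = 1`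
(a Tietze transformation). Naming `c = aTb` and eliminating `T = acb` leaves exactly the
free product of three copies of `ℤ/2`.
-/

theorem PresentedGroup.lift_of_eq_one {α : Type*} {rels : Set (FreeGroup α)} {r : FreeGroup α}
    (hr : r ∈ rels) : FreeGroup.lift (PresentedGroup.of (rels := rels)) r = 1 := by
  rw [← FreeGroup.lift_unique (f := PresentedGroup.of) (PresentedGroup.mk rels) fun _ => rfl]
  exact PresentedGroup.one_of_mem hr

section Relations

variable {G : Type*} [Group G]

structure SatisfiesB1Rels (t x y : G) : Prop where
  rel₁ : t * x * t * x = 1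
  rel₂ : t * y⁻¹ * t * y⁻¹ = 1
  rel₃ : y⁻¹ * x⁻¹ * y * x * t * t = 1

structure AreInvolutions (a b c : G) : Prop where
  mul_self₁ : a * a = 1
  mul_self₂ : b * b = 1
  mul_self₃ : c * c = 1

-- Each relator on either side is a product of conjugates of the relators on the other side.
theorem satisfiesB1Rels_iff_areInvolutions {t x y : G} :
    SatisfiesB1Rels t x y ↔ AreInvolutions (x * t) (t⁻¹ * y) (x * t * y) := by
  constructor
  · rintro ⟨h₁, h₂, h₃⟩
    refine ⟨?_, ?_, ?_⟩
    · calc x * t * (x * t) = x * (t * x * t * x) * x⁻¹ := by group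
        _ = 1 := by rw [h₁]; group
    · calc t⁻¹ * y * (t⁻¹ * y) = t⁻¹ * (t * y⁻¹ * t * y⁻¹)⁻¹ * t := by group
        _ = 1 := by rw [h₂]; group
    · calc x * t * y * (x * t * y)
          = t⁻¹ * (t * x * t * x) * t * (t⁻¹ * y * (y⁻¹ * x⁻¹ * y * x * t * t) * y⁻¹ * t) *
              (t⁻¹ * (t * y⁻¹ * t * y⁻¹)⁻¹ * t) := by group
        _ = 1 := by rw [h₁, h₂, h₃]; group
  · rintro ⟨ha, hb, hc⟩
    refine ⟨?_, ?_, ?_⟩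
    · calc t * x * t * x = t * (x * t * (x * t)) * t⁻¹ := by group
        _ = 1 := by rw [ha]; group
    · calc t * y⁻¹ * t * y⁻¹ = t * (t⁻¹ * y * (t⁻¹ * y))⁻¹ * t⁻¹ := by group
        _ = 1 := by rw [hb]; group
    · calc y⁻¹ * x⁻¹ * y * x * t * t
          = (t⁻¹ * y)⁻¹ * (x * t * (x * t))⁻¹ * (x * t * y * (x * t * y)) * (t⁻¹ * y) *
              (t⁻¹ * y * (t⁻¹ * y))⁻¹ := by group
        _ = 1 := by rw [ha, hb, hc]; group

namespace AreInvolutions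

variable {a b c : G}

theorem abca_mul_acb (h : AreInvolutions a b c) : a * b * c * a * (a * c * b) = a :=
  calc a * b * c * a * (a * c * b)
      = a * (b * c) * (a * a) * (b * c)⁻¹ * (b * (c * c) * b⁻¹) * (b * b) := by group
    _ = a := by rw [h.mul_self₁, h.mul_self₂, h.mul_self₃]; group

theorem acb_inv_mul_ac (h : AreInvolutions a b c) : (a * c * b)⁻¹ * (a * c) = b :=
  calc (a * c * b)⁻¹ * (a * c) = b * (b * b)⁻¹ := by group
    _ = b := by rw [h.mul_self₂, inv_one, mul_one]

theorem abca_mul_acb_mul_ac (h : AreInvolutions a b c) :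
    a * b * c * a * (a * c * b) * (a * c) = c := by
  rw [h.abca_mul_acb, ← mul_assoc, h.mul_self₁, one_mul]

theorem satisfiesB1Rels (h : AreInvolutions a b c) :
    SatisfiesB1Rels (a * c * b) (a * b * c * a) (a * c) := by
  rw [satisfiesB1Rels_iff_areInvolutions, h.abca_mul_acb_mul_ac, h.abca_mul_acb, h.acb_inv_mul_ac]
  exact h

end AreInvolutions

namespace SatisfiesB1Rels

variable {t x y : G}

theorem xt_mul_xty_mul_tinvy (h : SatisfiesB1Rels t x y) :
    x * t * (x * t * y) * (t⁻¹ * y) = t := by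
  obtain ⟨ha, hb, -⟩ := satisfiesB1Rels_iff_areInvolutions.1 h
  calc x * t * (x * t * y) * (t⁻¹ * y) = x * t * (x * t) * t * (t⁻¹ * y * (t⁻¹ * y)) := by group
    _ = t := by rw [ha, hb]; group

theorem xt_mul_tinvy_mul_xty_mul_xt (h : SatisfiesB1Rels t x y) :
    x * t * (t⁻¹ * y) * (x * t * y) * (x * t) = x := by
  obtain ⟨-, -, hc⟩ := satisfiesB1Rels_iff_areInvolutions.1 h
  calc x * t * (t⁻¹ * y) * (x * t * y) * (x * t) = x * (y * (x * t * y * (x * t * y)) * y⁻¹) := by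
        group
    _ = x := by rw [hc]; group

theorem xt_mul_xty (h : SatisfiesB1Rels t x y) : x * t * (x * t * y) = y := by
  obtain ⟨ha, -, -⟩ := satisfiesB1Rels_iff_areInvolutions.1 h
  rw [← mul_assoc, ha, one_mul]

end SatisfiesB1Rels

theorem forall_b1Rels_lift_eq_one_iff (f : B1Gen → G) :
    (∀ r ∈ B1Rels, FreeGroup.lift f r = 1) ↔ SatisfiesB1Rels (f .T) (f .X) (f .Y) := by
  simp only [B1Rels, Set.forall_mem_insert, Set.mem_singleton_iff, forall_eq, map_mul, map_inv,
    FreeGroup.lift_apply_of]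
  exact ⟨fun ⟨h₁, h₂, h₃⟩ => ⟨h₁, h₂, h₃⟩, fun ⟨h₁, h₂, h₃⟩ => ⟨h₁, h₂, h₃⟩⟩

theorem forall_triRels_lift_eq_one_iff (f : TriGen → G) :
    (∀ r ∈ TriRels, FreeGroup.lift f r = 1) ↔ AreInvolutions (f .A) (f .B) (f .C) := by
  simp only [TriRels, Set.forall_mem_insert, Set.mem_singleton_iff, forall_eq, map_mul,
    FreeGroup.lift_apply_of]
  exact ⟨fun ⟨h₁, h₂, h₃⟩ => ⟨h₁, h₂, h₃⟩, fun ⟨h₁, h₂, h₃⟩ => ⟨h₁, h₂, h₃⟩⟩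

end Relations

open PresentedGroup

theorem B1.satisfiesB1Rels_of : SatisfiesB1Rels (of .T : B1) (of .X) (of .Y) :=
  (forall_b1Rels_lift_eq_one_iff of).1 fun _ => lift_of_eq_one

theorem TriInv.areInvolutions_of : AreInvolutions (of .A : TriInv) (of .B) (of .C) :=
  (forall_triRels_lift_eq_one_iff of).1 fun _ => lift_of_eq_one

def B1Gen.toTriInv : B1Gen → TriInv
  | .T => of .A * of .C * of .B
  | .X => of .A * of .B * of .C * of .A
  | .Y => of .A * of .C

def TriGen.toB1 : TriGen → B1
  | .A => of .X * of .T
  | .B => (of .T)⁻¹ * of .Y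
  | .C => of .X * of .T * of .Y

def B1.toTriInv : B1 →* TriInv :=
  toGroup ((forall_b1Rels_lift_eq_one_iff B1Gen.toTriInv).2
    TriInv.areInvolutions_of.satisfiesB1Rels)

def TriInv.toB1 : TriInv →* B1 :=
  toGroup ((forall_triRels_lift_eq_one_iff TriGen.toB1).2
    (satisfiesB1Rels_iff_areInvolutions.1 B1.satisfiesB1Rels_of))

namespace B1

@[simp] theorem toTriInv_of_T : toTriInv (of .T) = of .A * of .C * of .B :=
  toGroup.of _

@[simp] theorem toTriInv_of_X : toTriInv (of .X) = of .A * of .B * of .C * of .A :=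
  toGroup.of _

@[simp] theorem toTriInv_of_Y : toTriInv (of .Y) = of .A * of .C := toGroup.of _

end B1

namespace TriInv

@[simp] theorem toB1_of_A : toB1 (of .A) = of .X * of .T := toGroup.of _

@[simp] theorem toB1_of_B : toB1 (of .B) = (of .T)⁻¹ * of .Y := toGroup.of _

@[simp] theorem toB1_of_C : toB1 (of .C) = of .X * of .T * of .Y := toGroup.of _

def equivB1 : TriInv ≃* B1 :=
  MonoidHom.toMulEquiv toB1 B1.toTriInv
    (PresentedGroup.ext fun
      | .A => by simpa using areInvolutions_of.abca_mul_acb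
      | .B => by simpa using areInvolutions_of.acb_inv_mul_ac
      | .C => by simpa using areInvolutions_of.abca_mul_acb_mul_ac)
    (PresentedGroup.ext fun
      | .T => by simpa using B1.satisfiesB1Rels_of.xt_mul_xty_mul_tinvy
      | .X => by simpa using B1.satisfiesB1Rels_of.xt_mul_tinvy_mul_xty_mul_xt
      | .Y => by simpa using B1.satisfiesB1Rels_of.xt_mul_xty)

end TriInv

/-- The assignment `A ↦ XT`, `B ↦ T⁻¹Y`, `C ↦ XTY` extends to a group isomorphism
`⟨A,B,C | A²=B²=C²=1⟩ ≅ 𝓑₁`, with inverse determined by `T ↦ ACB`, `X ↦ ABCA`,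
`Y ↦ AC`. -/
theorem triInv_iso_B1 :
    ∃ φ : TriInv ≃* B1,
      φ (PresentedGroup.of TriGen.A) =
          PresentedGroup.of B1Gen.X * PresentedGroup.of B1Gen.T ∧
      φ (PresentedGroup.of TriGen.B) =
          (PresentedGroup.of B1Gen.T)⁻¹ * PresentedGroup.of B1Gen.Y ∧
      φ (PresentedGroup.of TriGen.C) =
          PresentedGroup.of B1Gen.X * PresentedGroup.of B1Gen.T * PresentedGroup.of B1Gen.Y ∧
      φ.symm (PresentedGroup.of B1Gen.T) =
          PresentedGroup.of TriGen.A * PresentedGroup.of TriGen.C * PresentedGroup.of TriGen.B ∧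
      φ.symm (PresentedGroup.of B1Gen.X) =
          PresentedGroup.of TriGen.A * PresentedGroup.of TriGen.B * PresentedGroup.of TriGen.C *
            PresentedGroup.of TriGen.A ∧
      φ.symm (PresentedGroup.of B1Gen.Y) =
          PresentedGroup.of TriGen.A * PresentedGroup.of TriGen.C := by
  exact ⟨TriInv.equivB1, TriInv.toB1_of_A, TriInv.toB1_of_B, TriInv.toB1_of_C,
    B1.toTriInv_of_T, B1.toTriInv_of_X, B1.toTriInv_of_Y⟩
end

section
/- Let 𝓑_q be the group with presentation on generators T, X, Y, Q with relations: Q is central, TXT = X⁻¹, TY⁻¹T = Y, and Y⁻¹X⁻¹YXT² = Q⁻². Then the assignment T ↦ T, X ↦ X, Y ↦ Q⁻¹XY, Q ↦ Q extends to a group automorphism τ₊ of 𝓑_q. -/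
/-- Generators of the elliptic braid group `𝓑_q` of type `A₁`:
`T`, `X`, `Y` and the central generator `Q` (playing the role of `q^{1/4}`). -/
inductive BqGen : Type
  | T | X | Y | Q

open FreeGroup in
/-- Relations of `𝓑_q`: `TXT = X⁻¹`, `TY⁻¹T = Y`, `Y⁻¹X⁻¹YXT² = Q⁻²`, and `Q` central. -/
def BqRels : Set (FreeGroup BqGen) :=
  { of BqGen.T * of BqGen.X * of BqGen.T * of BqGen.X,
    of BqGen.T * (of BqGen.Y)⁻¹ * of BqGen.T * (of BqGen.Y)⁻¹,
    (of BqGen.Y)⁻¹ * (of BqGen.X)⁻¹ * of BqGen.Y * of BqGen.X * of BqGen.T * of BqGen.T *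
      of BqGen.Q * of BqGen.Q,
    of BqGen.Q * of BqGen.T * (of BqGen.Q)⁻¹ * (of BqGen.T)⁻¹,
    of BqGen.Q * of BqGen.X * (of BqGen.Q)⁻¹ * (of BqGen.X)⁻¹,
    of BqGen.Q * of BqGen.Y * (of BqGen.Q)⁻¹ * (of BqGen.Y)⁻¹ }

/-- The elliptic braid group `𝓑_q` of type `A₁`. -/
abbrev Bq : Type := PresentedGroup BqRels

namespace BqAux

lemma rel_one {r : FreeGroup BqGen} (hr : r ∈ BqRels) : PresentedGroup.mk BqRels r = 1 :=
  (QuotientGroup.eq_one_iff r).2 (Subgroup.subset_normalClosure hr)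

noncomputable abbrev t : Bq := PresentedGroup.of BqGen.T
noncomputable abbrev x : Bq := PresentedGroup.of BqGen.X
noncomputable abbrev y : Bq := PresentedGroup.of BqGen.Y
noncomputable abbrev q : Bq := PresentedGroup.of BqGen.Q

lemma rel1 : t * x * t * x = 1 := by
  simpa [map_mul, PresentedGroup.of] using rel_one (by simp [BqRels] :
    FreeGroup.of BqGen.T * FreeGroup.of BqGen.X * FreeGroup.of BqGen.T * FreeGroup.of BqGen.X
      ∈ BqRels)

lemma rel2 : t * y⁻¹ * t * y⁻¹ = 1 := by
  simpa [map_mul, PresentedGroup.of] using rel_one (by simp [BqRels] :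
    FreeGroup.of BqGen.T * (FreeGroup.of BqGen.Y)⁻¹ * FreeGroup.of BqGen.T *
      (FreeGroup.of BqGen.Y)⁻¹ ∈ BqRels)

lemma rel3 : y⁻¹ * x⁻¹ * y * x * t * t * q * q = 1 := by
  simpa [map_mul, PresentedGroup.of] using rel_one (by simp [BqRels] :
    (FreeGroup.of BqGen.Y)⁻¹ * (FreeGroup.of BqGen.X)⁻¹ * FreeGroup.of BqGen.Y *
      FreeGroup.of BqGen.X * FreeGroup.of BqGen.T * FreeGroup.of BqGen.T *
      FreeGroup.of BqGen.Q * FreeGroup.of BqGen.Q ∈ BqRels)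

lemma rel4 : q * t * q⁻¹ * t⁻¹ = 1 := by
  simpa [map_mul, PresentedGroup.of] using rel_one (by simp [BqRels] :
    FreeGroup.of BqGen.Q * FreeGroup.of BqGen.T * (FreeGroup.of BqGen.Q)⁻¹ *
      (FreeGroup.of BqGen.T)⁻¹ ∈ BqRels)

lemma rel5 : q * x * q⁻¹ * x⁻¹ = 1 := by
  simpa [map_mul, PresentedGroup.of] using rel_one (by simp [BqRels] :
    FreeGroup.of BqGen.Q * FreeGroup.of BqGen.X * (FreeGroup.of BqGen.Q)⁻¹ *
      (FreeGroup.of BqGen.X)⁻¹ ∈ BqRels)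

lemma rel6 : q * y * q⁻¹ * y⁻¹ = 1 := by
  simpa [map_mul, PresentedGroup.of] using rel_one (by simp [BqRels] :
    FreeGroup.of BqGen.Q * FreeGroup.of BqGen.Y * (FreeGroup.of BqGen.Q)⁻¹ *
      (FreeGroup.of BqGen.Y)⁻¹ ∈ BqRels)

lemma ct : q * t = t * q := by
  rw [← mul_inv_eq_one, show q*t*(t*q)⁻¹ = q*t*q⁻¹*t⁻¹ by group, rel4]

lemma cx : q * x = x * q := by
  rw [← mul_inv_eq_one, show q*x*(x*q)⁻¹ = q*x*q⁻¹*x⁻¹ by group, rel5]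

lemma cy : q * y = y * q := by
  rw [← mul_inv_eq_one, show q*y*(y*q)⁻¹ = q*y*q⁻¹*y⁻¹ by group, rel6]

lemma qCommute (g : Bq) : Commute q g := by
  refine PresentedGroup.induction_on g fun z => ?_
  induction z using FreeGroup.induction_on with
  | C1 => simpa using Commute.one_right q
  | of g => cases g
            · exact ct
            · exact cx
            · exact cy
            · exact Commute.refl q
  | inv_of g h => simpa using h.inv_right
  | mul a b ha hb => simpa [map_mul] using ha.mul_right hb

lemma hcq (g : Bq) : q * g = g * q := (qCommute g).eq
lemma hcq' (g : Bq) : q⁻¹ * g = g * q⁻¹ := ((qCommute g).inv_left).eq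
lemma hc2 (g : Bq) : q⁻¹ * q⁻¹ * g = g * (q⁻¹ * q⁻¹) :=
  (((qCommute g).inv_left).mul_left ((qCommute g).inv_left)).eq
lemma hc2q (g : Bq) : q * q * g = g * (q * q) := ((qCommute g).mul_left (qCommute g)).eq

lemma e1 : t * y⁻¹ = y * t⁻¹ := by
  rw [← mul_inv_eq_one, show t*y⁻¹*(y*t⁻¹)⁻¹ = t*y⁻¹*t*y⁻¹ by group, rel2]

lemma e2 : t⁻¹ * x⁻¹ = x * t := by
  rw [← mul_inv_eq_one, show t⁻¹*x⁻¹*(x*t)⁻¹ = t⁻¹*(t*x*t*x)⁻¹*t by group, rel1]; group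

lemma e3 : y * x * t * t = x * y * q⁻¹ * q⁻¹ := by
  rw [← mul_inv_eq_one,
    show y*x*t*t*(x*y*q⁻¹*q⁻¹)⁻¹ = (x*y)*(y⁻¹*x⁻¹*y*x*t*t*q*q)*(x*y)⁻¹ by
      group; rw [zpow_two]; simp only [mul_assoc], rel3]
  group

lemma e3' : t⁻¹ * t⁻¹ * x⁻¹ * y⁻¹ * x = q * q * y⁻¹ := by
  rw [← mul_inv_eq_one,
    show t⁻¹*t⁻¹*x⁻¹*y⁻¹*x*(q*q*y⁻¹)⁻¹ = (q*q)*(y⁻¹*x⁻¹*y*x*t*t*q*q)⁻¹*(q*q)⁻¹ by group, rel3]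
  group

-- identities needed for φ (T ↦ t, X ↦ x, Y ↦ q⁻¹xy, Q ↦ q)
lemma phi2 : t * (q⁻¹*x*y)⁻¹ * t * (q⁻¹*x*y)⁻¹ = 1 := by
  rw [show t * (q⁻¹*x*y)⁻¹ * t * (q⁻¹*x*y)⁻¹ = t*y⁻¹*x⁻¹*(q*t)*(y⁻¹*(x⁻¹*q)) by group, hcq t,
    show t*y⁻¹*x⁻¹*(t*q)*(y⁻¹*(x⁻¹*q)) = t*y⁻¹*x⁻¹*t*(q*y⁻¹)*(x⁻¹*q) by group, hcq y⁻¹,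
    show t*y⁻¹*x⁻¹*t*(y⁻¹*q)*(x⁻¹*q) = t*y⁻¹*x⁻¹*t*y⁻¹*(q*x⁻¹)*q by group, hcq x⁻¹,
    show t*y⁻¹*x⁻¹*t*y⁻¹*(x⁻¹*q)*q = (t*y⁻¹)*(x⁻¹*t*y⁻¹*x⁻¹*(q*q)) by group, e1,
    show (y*t⁻¹)*(x⁻¹*t*y⁻¹*x⁻¹*(q*q)) = y*(t⁻¹*x⁻¹)*(t*(y⁻¹*(x⁻¹*(q*q)))) by group, e2,
    show y*(x*t)*(t*(y⁻¹*(x⁻¹*(q*q)))) = (y*x*t*t)*(y⁻¹*(x⁻¹*(q*q))) by group, e3,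
    show (x*y*q⁻¹*q⁻¹)*(y⁻¹*(x⁻¹*(q*q))) = x*y*(q⁻¹*q⁻¹*(y⁻¹*x⁻¹))*(q*q) by group,
    hc2 (y⁻¹*x⁻¹)]
  group

lemma phi3 : (q⁻¹*x*y)⁻¹ * x⁻¹ * (q⁻¹*x*y) * x * t * t * q * q = 1 := by
  rw [show (q⁻¹*x*y)⁻¹ * x⁻¹ * (q⁻¹*x*y) * x * t * t * q * q
      = y⁻¹*x⁻¹*(q*x⁻¹)*(q⁻¹*(x*(y*(x*(t*(t*(q*q))))))) by group, hcq x⁻¹,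
    show y⁻¹*x⁻¹*(x⁻¹*q)*(q⁻¹*(x*(y*(x*(t*(t*(q*q)))))))
      = y⁻¹*x⁻¹*y*x*t*t*q*q by group, rel3]

lemma phi6 : q * (q⁻¹*x*y) * q⁻¹ * (q⁻¹*x*y)⁻¹ = 1 := by
  rw [show q * (q⁻¹*x*y) * q⁻¹ * (q⁻¹*x*y)⁻¹ = x*y*(q⁻¹*(y⁻¹*x⁻¹))*q by group,
    hcq' (y⁻¹*x⁻¹)]
  group

-- identities needed for ψ (T ↦ t, X ↦ x, Y ↦ qx⁻¹y, Q ↦ q)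
lemma psi2 : t * (q*x⁻¹*y)⁻¹ * t * (q*x⁻¹*y)⁻¹ = 1 := by
  rw [show t * (q*x⁻¹*y)⁻¹ * t * (q*x⁻¹*y)⁻¹ = (t*y⁻¹)*(x*(q⁻¹*t)*(y⁻¹*(x*q⁻¹))) by group, e1,
    hcq' t,
    show (y*t⁻¹)*(x*(t*q⁻¹)*(y⁻¹*(x*q⁻¹))) = y*t⁻¹*x*t*(q⁻¹*y⁻¹)*(x*q⁻¹) by group, hcq' y⁻¹,
    show y*t⁻¹*x*t*(y⁻¹*q⁻¹)*(x*q⁻¹) = y*t⁻¹*x*t*y⁻¹*(q⁻¹*x)*q⁻¹ by group, hcq' x,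
    show y*t⁻¹*x*t*y⁻¹*(x*q⁻¹)*q⁻¹ = y*t⁻¹*(x*t)*(y⁻¹*(x*(q⁻¹*q⁻¹))) by group, ← e2,
    show y*t⁻¹*(t⁻¹*x⁻¹)*(y⁻¹*(x*(q⁻¹*q⁻¹))) = y*(t⁻¹*t⁻¹*x⁻¹*y⁻¹*x)*(q⁻¹*q⁻¹) by group, e3',
    show y*(q*q*y⁻¹)*(q⁻¹*q⁻¹) = y*((q*q)*y⁻¹)*(q⁻¹*q⁻¹) by group, hc2q y⁻¹]
  group

lemma psi3 : (q*x⁻¹*y)⁻¹ * x⁻¹ * (q*x⁻¹*y) * x * t * t * q * q = 1 := by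
  rw [show (q*x⁻¹*y)⁻¹ * x⁻¹ * (q*x⁻¹*y) * x * t * t * q * q
      = y⁻¹*x*(q⁻¹*x⁻¹)*(q*(x⁻¹*(y*(x*(t*(t*(q*q))))))) by group, hcq' x⁻¹,
    show y⁻¹*x*(x⁻¹*q⁻¹)*(q*(x⁻¹*(y*(x*(t*(t*(q*q)))))))
      = y⁻¹*x⁻¹*y*x*t*t*q*q by group, rel3]

lemma psi6 : q * (q*x⁻¹*y) * q⁻¹ * (q*x⁻¹*y)⁻¹ = 1 := by
  rw [show q * (q*x⁻¹*y) * q⁻¹ * (q*x⁻¹*y)⁻¹ = q*(q*(x⁻¹*(y*(q⁻¹*(y⁻¹*x)))))*q⁻¹ by group,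
    hcq' (y⁻¹*x)]
  group

lemma compY1 : q * x⁻¹ * (q⁻¹*x*y) = y := by
  rw [show q * x⁻¹ * (q⁻¹*x*y) = (q*x⁻¹)*(q⁻¹*(x*y)) by group, hcq x⁻¹]; group

lemma compY2 : q⁻¹ * x * (q*x⁻¹*y) = y := by
  rw [show q⁻¹ * x * (q*x⁻¹*y) = q⁻¹*(x*q)*(x⁻¹*y) by group, ← hcq x]; group

noncomputable def fphi : BqGen → Bq
  | BqGen.T => t
  | BqGen.X => x
  | BqGen.Y => q⁻¹ * x * y
  | BqGen.Q => q

noncomputable def fpsi : BqGen → Bq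
  | BqGen.T => t
  | BqGen.X => x
  | BqGen.Y => q * x⁻¹ * y
  | BqGen.Q => q

lemma hphi : ∀ r ∈ BqRels, FreeGroup.lift fphi r = 1 := by
  intro r hr
  simp only [BqRels, Set.mem_insert_iff, Set.mem_singleton_iff] at hr
  rcases hr with rfl|rfl|rfl|rfl|rfl|rfl <;>
    simp only [map_mul, map_inv, FreeGroup.lift_apply_of, fphi]
  · exact rel1
  · exact phi2
  · exact phi3
  · exact rel4
  · exact rel5
  · exact phi6

lemma hpsi : ∀ r ∈ BqRels, FreeGroup.lift fpsi r = 1 := by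
  intro r hr
  simp only [BqRels, Set.mem_insert_iff, Set.mem_singleton_iff] at hr
  rcases hr with rfl|rfl|rfl|rfl|rfl|rfl <;>
    simp only [map_mul, map_inv, FreeGroup.lift_apply_of, fpsi]
  · exact rel1
  · exact psi2
  · exact psi3
  · exact rel4
  · exact rel5
  · exact psi6

noncomputable def phi : Bq →* Bq := PresentedGroup.toGroup hphi
noncomputable def psi : Bq →* Bq := PresentedGroup.toGroup hpsi

lemma psi_phi : psi.comp phi = MonoidHom.id Bq := by
  apply PresentedGroup.ext
  intro g
  cases g <;>
    simp only [MonoidHom.comp_apply, MonoidHom.id_apply, phi, psi, PresentedGroup.toGroup.of,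
      fphi, fpsi, map_mul, map_inv]
  · exact compY2

lemma phi_psi : phi.comp psi = MonoidHom.id Bq := by
  apply PresentedGroup.ext
  intro g
  cases g <;>
    simp only [MonoidHom.comp_apply, MonoidHom.id_apply, phi, psi, PresentedGroup.toGroup.of,
      fphi, fpsi, map_mul, map_inv]
  · exact compY1

end BqAux

/-- The assignment `T ↦ T`, `X ↦ X`, `Y ↦ Q⁻¹XY`, `Q ↦ Q` extends to a group
automorphism `τ₊` of the elliptic braid group `𝓑_q`. -/
theorem tau_plus_automorphism :
    ∃ τp : Bq ≃* Bq,
      τp (PresentedGroup.of BqGen.T) = PresentedGroup.of BqGen.T ∧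
      τp (PresentedGroup.of BqGen.X) = PresentedGroup.of BqGen.X ∧
      τp (PresentedGroup.of BqGen.Y) =
          (PresentedGroup.of BqGen.Q)⁻¹ * PresentedGroup.of BqGen.X *
            PresentedGroup.of BqGen.Y ∧
      τp (PresentedGroup.of BqGen.Q) = PresentedGroup.of BqGen.Q := by
  refine ⟨BqAux.phi.toMulEquiv BqAux.psi BqAux.psi_phi BqAux.phi_psi, ?_, ?_, ?_, ?_⟩ <;>
    simp [MonoidHom.toMulEquiv, BqAux.phi, PresentedGroup.toGroup.of, BqAux.fphi]
end

section
/- Let 𝓑_q be the group with presentation on generators T, X, Y, Q with relations: Q is central, TXT = X⁻¹, TY⁻¹T = Y, and Y⁻¹X⁻¹YXT² = Q⁻². Then the assignment T ↦ T, X ↦ QYX, Y ↦ Y, Q ↦ Q extends to a group automorphism τ₋ of 𝓑_q. -/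
/-!
Substituting `X ↦ QYX` into the defining relations of `𝓑_q` yields an equivalent system of
relations. The commutator relation does not change because `Q` commutes with `Y`; and, given the
relations for `T`, `Y` and `Q`, one has `(TQYX)² = Q²(TYX)² = (TX)²`, so `TXT = X⁻¹` is equivalent
to its image. Hence both `X ↦ QYX` and `X ↦ (QY)⁻¹X` (fixing `T`, `Y`, `Q`) define endomorphisms
of `𝓑_q`, and they are mutually inverse.
-/

section BqRelations

variable {G : Type*} [Group G] {t x y q : G}

structure SatisfiesBqRels (t x y q : G) : Prop where
  t_mul_x_mul_t : t * x * t = x⁻¹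
  t_mul_inv_y_mul_t : t * y⁻¹ * t = y
  commutator_mul_sq : y⁻¹ * x⁻¹ * y * x * t ^ 2 = q⁻¹ ^ 2
  commute_t : Commute q t
  commute_x : Commute q x
  commute_y : Commute q y

theorem satisfiesBqRels_iff_forall_lift_eq_one (f : BqGen → G) :
    SatisfiesBqRels (f .T) (f .X) (f .Y) (f .Q) ↔ ∀ r ∈ BqRels, FreeGroup.lift f r = 1 := by
  have rel_x (a b : G) : a * b * a * b = 1 ↔ a * b * a = b⁻¹ := mul_eq_one_iff_eq_inv
  have rel_q (s a b : G) : s * a * a * b * b = 1 ↔ s * a ^ 2 = b⁻¹ ^ 2 := by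
    rw [mul_eq_one_iff_eq_inv, ← eq_mul_inv_iff_mul_eq, mul_assoc s, ← pow_two, ← pow_two, inv_pow]
  have rel_commute (a b : G) : a * b * a⁻¹ * b⁻¹ = 1 ↔ Commute a b := by
    rw [mul_inv_eq_one, mul_inv_eq_iff_eq_mul]; rfl
  simp only [BqRels, Set.mem_insert_iff, Set.mem_singleton_iff, forall_eq_or_imp, forall_eq,
    map_mul, map_inv, FreeGroup.lift_apply_of]
  simp only [rel_x, rel_q, rel_commute, inv_inv]
  exact ⟨fun ⟨h₁, h₂, h₃, h₄, h₅, h₆⟩ => ⟨h₁, h₂, h₃, h₄, h₅, h₆⟩,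
    fun ⟨h₁, h₂, h₃, h₄, h₅, h₆⟩ => ⟨h₁, h₂, h₃, h₄, h₅, h₆⟩⟩

theorem mul_mul_eq_inv_iff_sq_eq_one (a b : G) : a * b * a = b⁻¹ ↔ (a * b) ^ 2 = 1 := by
  rw [pow_two, ← mul_assoc, mul_eq_one_iff_eq_inv]

theorem commute_mul_mul_right_iff (hqy : Commute q y) : Commute q (q * y * x) ↔ Commute q x := by
  refine ⟨fun h => ?_, ((Commute.refl q).mul_right hqy).mul_right⟩
  simpa [mul_assoc] using ((Commute.refl q).mul_right hqy).inv_right.mul_right h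

theorem commutator_inv_inv_q_mul_y_mul_x (hqy : Commute q y) :
    y⁻¹ * (q * y * x)⁻¹ * y * (q * y * x) = y⁻¹ * x⁻¹ * y * x :=
  calc y⁻¹ * (q * y * x)⁻¹ * y * (q * y * x) = y⁻¹ * x⁻¹ * y⁻¹ * (q⁻¹ * y) * q * y * x := by group
    _ = y⁻¹ * x⁻¹ * y * x := by rw [hqy.inv_left.eq]; group

theorem sq_t_mul_q_mul_y_mul_x (hqt : Commute q t) (hqx : Commute q x) (hqy : Commute q y)
    (hy : t * y⁻¹ * t = y) (hc : y⁻¹ * x⁻¹ * y * x * t ^ 2 = q⁻¹ ^ 2) :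
    (t * (q * y * x)) ^ 2 = (t * x) ^ 2 := by
  have hq : Commute (q ^ 2) (t * x * y) := ((hqt.mul_right hqx).mul_right hqy).pow_left 2
  calc (t * (q * y * x)) ^ 2 = (q * (t * y * x)) ^ 2 := by
        simp only [← mul_assoc]; rw [← hqt.eq]
    _ = q ^ 2 * (t * y * x * t * y * x) := by
        rw [((hqt.mul_right hqy).mul_right hqx).mul_pow, pow_two (t * y * x)]; group
    _ = q ^ 2 * (t * y * x * t * (t * y⁻¹ * t) * x) := by rw [hy]
    _ = q ^ 2 * (t * x * y) * (y⁻¹ * x⁻¹ * y * x * t ^ 2) * (y⁻¹ * t * x) := by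
        simp only [pow_two]; group
    _ = t * x * y * (q ^ 2 * q⁻¹ ^ 2) * (y⁻¹ * t * x) := by rw [hc, hq.eq]; group
    _ = (t * x) ^ 2 := by simp only [pow_two]; group

theorem satisfiesBqRels_q_mul_y_mul_x_iff :
    SatisfiesBqRels t (q * y * x) y q ↔ SatisfiesBqRels t x y q := by
  constructor
  · rintro ⟨h₁, hy, hc, hqt, hqx, hqy⟩
    rw [commutator_inv_inv_q_mul_y_mul_x hqy] at hc
    rw [commute_mul_mul_right_iff hqy] at hqx
    rw [mul_mul_eq_inv_iff_sq_eq_one, sq_t_mul_q_mul_y_mul_x hqt hqx hqy hy hc,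
      ← mul_mul_eq_inv_iff_sq_eq_one] at h₁
    exact ⟨h₁, hy, hc, hqt, hqx, hqy⟩
  · rintro ⟨h₁, hy, hc, hqt, hqx, hqy⟩
    refine ⟨?_, hy, ?_, hqt, (commute_mul_mul_right_iff hqy).mpr hqx, hqy⟩
    · rwa [mul_mul_eq_inv_iff_sq_eq_one, sq_t_mul_q_mul_y_mul_x hqt hqx hqy hy hc,
        ← mul_mul_eq_inv_iff_sq_eq_one]
    · rwa [commutator_inv_inv_q_mul_y_mul_x hqy]

@[simp]
def BqGen.elim (t x y q : G) : BqGen → G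
  | .T => t
  | .X => x
  | .Y => y
  | .Q => q

namespace Bq

open PresentedGroup

def lift (h : SatisfiesBqRels t x y q) : Bq →* G :=
  toGroup ((satisfiesBqRels_iff_forall_lift_eq_one (BqGen.elim t x y q)).mp h)

@[simp]
theorem lift_of (h : SatisfiesBqRels t x y q) (a : BqGen) :
    lift h (of a) = BqGen.elim t x y q a :=
  toGroup.of _

theorem satisfiesBqRels_of : SatisfiesBqRels (of .T : Bq) (of .X) (of .Y) (of .Q) := by
  refine (satisfiesBqRels_iff_forall_lift_eq_one of).mpr fun r hr => ?_
  have : FreeGroup.lift (of : BqGen → Bq) = mk BqRels := FreeGroup.ext_hom _ _ fun _ => FreeGroup.lift_apply_of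
  rw [this]
  exact one_of_mem hr

def tauMinus : Bq ≃* Bq :=
  (lift (satisfiesBqRels_q_mul_y_mul_x_iff.mpr satisfiesBqRels_of)).toMulEquiv
    (lift (x := (of .Q * of .Y)⁻¹ * of .X)
      (satisfiesBqRels_q_mul_y_mul_x_iff.mp (by rw [mul_inv_cancel_left]; exact satisfiesBqRels_of)))
    (ext fun a => by cases a <;> simp [mul_assoc])
    (ext fun a => by cases a <;> simp [mul_assoc])

@[simp]
theorem tauMinus_of (a : BqGen) :
    tauMinus (of a) = BqGen.elim (of .T) (of .Q * of .Y * of .X) (of .Y) (of .Q) a :=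
  lift_of (satisfiesBqRels_q_mul_y_mul_x_iff.mpr satisfiesBqRels_of) a

end Bq

end BqRelations

/-- The assignment `T ↦ T`, `X ↦ QYX`, `Y ↦ Y`, `Q ↦ Q` extends to a group
automorphism `τ₋` of the elliptic braid group `𝓑_q`. -/
theorem tau_minus_automorphism :
    ∃ τm : Bq ≃* Bq,
      τm (PresentedGroup.of BqGen.T) = PresentedGroup.of BqGen.T ∧
      τm (PresentedGroup.of BqGen.X) =
          PresentedGroup.of BqGen.Q * PresentedGroup.of BqGen.Y *
            PresentedGroup.of BqGen.X ∧
      τm (PresentedGroup.of BqGen.Y) = PresentedGroup.of BqGen.Y ∧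
      τm (PresentedGroup.of BqGen.Q) = PresentedGroup.of BqGen.Q :=
  ⟨Bq.tauMinus, by simp⟩
end

section
/- Let 𝓑_q be the group with presentation on generators T, X, Y, Q with relations: Q is central, TXT = X⁻¹, TY⁻¹T = Y, and Y⁻¹X⁻¹YXT² = Q⁻². Then the assignment T ↦ T⁻¹, X ↦ Y, Y ↦ X, Q ↦ Q⁻¹ extends to a group automorphism ε of 𝓑_q, and ε is an involution: ε ∘ ε = id. -/
namespace BqEps

/-- The target of the generators under `ε`. -/
def f : BqGen → Bq
  | BqGen.T => (PresentedGroup.of BqGen.T)⁻¹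
  | BqGen.X => PresentedGroup.of BqGen.Y
  | BqGen.Y => PresentedGroup.of BqGen.X
  | BqGen.Q => (PresentedGroup.of BqGen.Q)⁻¹

lemma rel_one (r : FreeGroup BqGen) (hr : r ∈ BqRels) : PresentedGroup.mk BqRels r = 1 :=
  (QuotientGroup.eq_one_iff r).2 (Subgroup.subset_normalClosure hr)

lemma cyclic_inv {G : Type*} [Group G] {a b : G} (h : a * b * a * b = 1) :
    a⁻¹ * b⁻¹ * a⁻¹ * b⁻¹ = 1 := by
  have h1 : b * a * b * a = 1 := by
    have e : b * a * b * a = a⁻¹ * (a * b * a * b) * a := by group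
    rw [e, h]; group
  have e2 : a⁻¹ * b⁻¹ * a⁻¹ * b⁻¹ = (b * a * b * a)⁻¹ := by group
  rw [e2, h1]; group

local notation "T" => (PresentedGroup.of BqGen.T : Bq)
local notation "X" => (PresentedGroup.of BqGen.X : Bq)
local notation "Y" => (PresentedGroup.of BqGen.Y : Bq)
local notation "Q" => (PresentedGroup.of BqGen.Q : Bq)

lemma rel1 : T * X * T * X = 1 := by
  have := rel_one _ (show _ ∈ BqRels from Or.inl rfl)
  simpa [PresentedGroup.of] using this

lemma rel2 : T * Y⁻¹ * T * Y⁻¹ = 1 := by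
  have := rel_one _ (show _ ∈ BqRels from Or.inr (Or.inl rfl))
  simpa [PresentedGroup.of] using this

lemma rel3 : Y⁻¹ * X⁻¹ * Y * X * T * T * Q * Q = 1 := by
  have := rel_one _ (show _ ∈ BqRels from Or.inr (Or.inr (Or.inl rfl)))
  simpa [PresentedGroup.of] using this

lemma rel4 : Q * T * Q⁻¹ * T⁻¹ = 1 := by
  have := rel_one _ (show _ ∈ BqRels from Or.inr (Or.inr (Or.inr (Or.inl rfl))))
  simpa [PresentedGroup.of] using this

lemma rel5 : Q * X * Q⁻¹ * X⁻¹ = 1 := by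
  have := rel_one _ (show _ ∈ BqRels from Or.inr (Or.inr (Or.inr (Or.inr (Or.inl rfl)))))
  simpa [PresentedGroup.of] using this

lemma rel6 : Q * Y * Q⁻¹ * Y⁻¹ = 1 := by
  have := rel_one _ (show _ ∈ BqRels from Or.inr (Or.inr (Or.inr (Or.inr (Or.inr rfl)))))
  simpa [PresentedGroup.of] using this

lemma commQT : Commute Q T := by
  have h : Q * T = T * Q := by
    have e : Q * T = (Q * T * Q⁻¹ * T⁻¹) * (T * Q) := by group
    rw [e, rel4]; group
  exact h

lemma commQX : Commute Q X := by
  have h : Q * X = X * Q := by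
    have e : Q * X = (Q * X * Q⁻¹ * X⁻¹) * (X * Q) := by group
    rw [e, rel5]; group
  exact h

lemma commQY : Commute Q Y := by
  have h : Q * Y = Y * Q := by
    have e : Q * Y = (Q * Y * Q⁻¹ * Y⁻¹) * (Y * Q) := by group
    rw [e, rel6]; group
  exact h

lemma rels_hold : ∀ r ∈ BqRels, FreeGroup.lift f r = 1 := by
  intro r hr
  rcases hr with rfl | rfl | rfl | rfl | rfl | rfl <;>
    simp only [map_mul, map_inv, FreeGroup.lift_apply_of, f]
  · -- T⁻¹ * Y * T⁻¹ * Y = 1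
    have := cyclic_inv rel2
    simpa using this
  · -- T⁻¹ * X⁻¹ * T⁻¹ * X⁻¹ = 1  (note (Y)⁻¹ ↦ X⁻¹)
    exact cyclic_inv rel1
  · -- X⁻¹ * Y⁻¹ * X * Y * T⁻¹ * T⁻¹ * Q⁻¹ * Q⁻¹ = 1
    have hA : Y⁻¹ * X⁻¹ * Y * X = Q⁻¹ * Q⁻¹ * T⁻¹ * T⁻¹ := by
      have e : Y⁻¹ * X⁻¹ * Y * X =
          (Y⁻¹ * X⁻¹ * Y * X * T * T * Q * Q) * (Q⁻¹ * Q⁻¹ * T⁻¹ * T⁻¹) := by group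
      rw [e, rel3]; group
    have h3 : X⁻¹ * Y⁻¹ * X * Y = T * T * Q * Q := by
      have e2 : X⁻¹ * Y⁻¹ * X * Y = (Y⁻¹ * X⁻¹ * Y * X)⁻¹ := by group
      rw [e2, hA]; group
      simp [zpow_two, pow_two, mul_assoc]
    have hc : T * T * Q * Q * (T⁻¹ * T⁻¹ * Q⁻¹ * Q⁻¹) = 1 := by
      have c1 : Q * T⁻¹ = T⁻¹ * Q := (commQT.inv_right).eq
      calc T * T * Q * Q * (T⁻¹ * T⁻¹ * Q⁻¹ * Q⁻¹)
          = T * T * Q * (Q * T⁻¹) * T⁻¹ * Q⁻¹ * Q⁻¹ := by group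
        _ = T * T * Q * (T⁻¹ * Q) * T⁻¹ * Q⁻¹ * Q⁻¹ := by rw [c1]
        _ = T * T * (Q * T⁻¹) * (Q * T⁻¹) * Q⁻¹ * Q⁻¹ := by group
        _ = T * T * (T⁻¹ * Q) * (T⁻¹ * Q) * Q⁻¹ * Q⁻¹ := by rw [c1]
        _ = T * (Q * T⁻¹) * Q * Q⁻¹ * Q⁻¹ := by group
        _ = T * (T⁻¹ * Q) * Q * Q⁻¹ * Q⁻¹ := by rw [c1]
        _ = 1 := by group
    calc X⁻¹ * Y⁻¹ * X * Y * T⁻¹ * T⁻¹ * Q⁻¹ * Q⁻¹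
        = (X⁻¹ * Y⁻¹ * X * Y) * (T⁻¹ * T⁻¹ * Q⁻¹ * Q⁻¹) := by group
      _ = T * T * Q * Q * (T⁻¹ * T⁻¹ * Q⁻¹ * Q⁻¹) := by rw [h3]
      _ = 1 := hc
  · -- Q⁻¹ * T⁻¹ * Q * T = 1
    have c : Commute Q⁻¹ T⁻¹ := commQT.inv_inv
    have := c.eq
    calc Q⁻¹ * T⁻¹ * (Q⁻¹)⁻¹ * (T⁻¹)⁻¹ = (Q⁻¹ * T⁻¹) * Q * T := by group
      _ = (T⁻¹ * Q⁻¹) * Q * T := by rw [this]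
      _ = 1 := by group
  · have c : Commute Q⁻¹ Y := commQY.inv_left
    have := c.eq
    calc Q⁻¹ * Y * (Q⁻¹)⁻¹ * Y⁻¹ = (Q⁻¹ * Y) * Q * Y⁻¹ := by group
      _ = (Y * Q⁻¹) * Q * Y⁻¹ := by rw [this]
      _ = 1 := by group
  · have c : Commute Q⁻¹ X := commQX.inv_left
    have := c.eq
    calc Q⁻¹ * X * (Q⁻¹)⁻¹ * X⁻¹ = (Q⁻¹ * X) * Q * X⁻¹ := by group
      _ = (X * Q⁻¹) * Q * X⁻¹ := by rw [this]
      _ = 1 := by group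

/-- The endomorphism `ε`. -/
def phi : Bq →* Bq := PresentedGroup.toGroup rels_hold

lemma phi_T : phi (PresentedGroup.of BqGen.T) = (PresentedGroup.of BqGen.T)⁻¹ :=
  PresentedGroup.toGroup.of rels_hold
lemma phi_X : phi (PresentedGroup.of BqGen.X) = PresentedGroup.of BqGen.Y :=
  PresentedGroup.toGroup.of rels_hold
lemma phi_Y : phi (PresentedGroup.of BqGen.Y) = PresentedGroup.of BqGen.X :=
  PresentedGroup.toGroup.of rels_hold
lemma phi_Q : phi (PresentedGroup.of BqGen.Q) = (PresentedGroup.of BqGen.Q)⁻¹ :=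
  PresentedGroup.toGroup.of rels_hold

lemma phi_phi : ∀ g : Bq, phi (phi g) = g := by
  have h : phi.comp phi = MonoidHom.id Bq := by
    apply PresentedGroup.ext
    intro x
    cases x <;>
      simp [MonoidHom.comp_apply, phi_T, phi_X, phi_Y, phi_Q]
  intro g
  have := DFunLike.congr_fun h g
  simpa using this

end BqEps

/-- The assignment `T ↦ T⁻¹`, `X ↦ Y`, `Y ↦ X`, `Q ↦ Q⁻¹` extends to a group
automorphism `ε` of the elliptic braid group `𝓑_q`, and `ε` is an involution. -/
theorem epsilon_involution :
    ∃ ε : Bq ≃* Bq,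
      ε (PresentedGroup.of BqGen.T) = (PresentedGroup.of BqGen.T)⁻¹ ∧
      ε (PresentedGroup.of BqGen.X) = PresentedGroup.of BqGen.Y ∧
      ε (PresentedGroup.of BqGen.Y) = PresentedGroup.of BqGen.X ∧
      ε (PresentedGroup.of BqGen.Q) = (PresentedGroup.of BqGen.Q)⁻¹ ∧
      ∀ g : Bq, ε (ε g) = g := by
  refine ⟨{ toFun := BqEps.phi, invFun := BqEps.phi,
            left_inv := BqEps.phi_phi, right_inv := BqEps.phi_phi,
            map_mul' := BqEps.phi.map_mul }, ?_, ?_, ?_, ?_, ?_⟩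
  · exact BqEps.phi_T
  · exact BqEps.phi_X
  · exact BqEps.phi_Y
  · exact BqEps.phi_Q
  · exact fun g => BqEps.phi_phi g
end

section
/- Let q^{1/2} and t^{1/2} be nonzero complex numbers. On the algebra 𝒫 = ℂ[X, X⁻¹] of Laurent polynomials define linear operators: s(f)(X) = f(X⁻¹); p(f)(X) = f(q^{1/2}X); T(f) = t^{1/2}·s(f) + (t^{1/2} − t^{−1/2})·g, where g is the unique Laurent polynomial with (X² − 1)·g = s(f) − f; and Y = s ∘ p ∘ T. Then: (i) for every f ∈ 𝒫 such a g exists and is unique, so T is well defined; (ii) T and Y are bijective; (iii) the following operator identities hold on 𝒫: (T − t^{1/2}) ∘ (T + t^{−1/2}) = 0; T ∘ M_X ∘ T = M_{X⁻¹}; T ∘ Y⁻¹ ∘ T = Y; and Y⁻¹ ∘ M_{X⁻¹} ∘ Y ∘ M_X ∘ T ∘ T = q^{−1/2}·id, where M_X and M_{X⁻¹} denote multiplication by X and X⁻¹. In other words, these operators define the polynomial representation of the double affine Hecke algebra of type A₁ on 𝒫. -/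
open LaurentPolynomial

/-- The polynomial representation of the double affine Hecke algebra of type `A₁`
on the Laurent polynomials `𝒫 = ℂ[X, X⁻¹]`, with parameters `q^{1/2} = q2 ≠ 0` and
`t^{1/2} = t2 ≠ 0`.  Here `s` is the substitution `f(X) ↦ f(X⁻¹)` (the ℂ-linear map
with `s(Xⁿ) = X⁻ⁿ`), `p` is the substitution `f(X) ↦ f(q^{1/2}X)` (the ℂ-linear map
with `p(Xⁿ) = q2ⁿ Xⁿ`), `Top` is the Demazure–Lusztig operator
`T(f) = t^{1/2} s(f) + (t^{1/2} − t^{−1/2}) g` where `(X² − 1) g = s(f) − f`, and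
`Yop = s ∘ p ∘ Top` is the difference Dunkl operator.  Then:
(i) such a `g` always exists and is unique, so `T` is well defined;
(ii) `T` and `Y` are bijective;
(iii) `(T − t^{1/2})(T + t^{−1/2}) = 0`, `T ∘ M_X ∘ T = M_{X⁻¹}`, `T ∘ Y⁻¹ ∘ T = Y`
and `Y⁻¹ ∘ M_{X⁻¹} ∘ Y ∘ M_X ∘ T² = q^{−1/2}·id` hold as operator identities on `𝒫`. -/
theorem daha_polynomial_representation (q2 t2 : ℂ) (hq2 : q2 ≠ 0) (ht2 : t2 ≠ 0)
    (s : LaurentPolynomial ℂ →ₗ[ℂ] LaurentPolynomial ℂ)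
    (hs : ∀ n : ℤ, s (LaurentPolynomial.T n) = LaurentPolynomial.T (-n))
    (p : LaurentPolynomial ℂ →ₗ[ℂ] LaurentPolynomial ℂ)
    (hp : ∀ n : ℤ, p (LaurentPolynomial.T n) = q2 ^ n • LaurentPolynomial.T n) :
    (∀ f : LaurentPolynomial ℂ, ∃! g : LaurentPolynomial ℂ,
        (LaurentPolynomial.T 1 ^ 2 - 1) * g = s f - f) ∧
    (∀ Top Yop : LaurentPolynomial ℂ → LaurentPolynomial ℂ,
      (∀ f g : LaurentPolynomial ℂ, (LaurentPolynomial.T 1 ^ 2 - 1) * g = s f - f →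
        Top f = t2 • s f + (t2 - t2⁻¹) • g) →
      (∀ f : LaurentPolynomial ℂ, Yop f = s (p (Top f))) →
      Function.Bijective Top ∧ Function.Bijective Yop ∧
      (∀ f, Top (Top f + t2⁻¹ • f) = t2 • (Top f + t2⁻¹ • f)) ∧
      (∀ f, Top (LaurentPolynomial.T 1 * Top f) = LaurentPolynomial.T (-1) * f) ∧
      (∀ f g, Yop g = Top f → Top g = Yop f) ∧
      (∀ f, LaurentPolynomial.T (-1) * Yop (LaurentPolynomial.T 1 * Top (Top f)) =
        Yop (q2⁻¹ • f))) := by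
  classical
  -- basic facts about T
  have hTT : ∀ m n : ℤ, (T m : LaurentPolynomial ℂ) * T n = T (m + n) :=
    fun m n => (T_add m n).symm
  have hsq : ((T 1 : LaurentPolynomial ℂ)) ^ 2 = T 2 := by
    rw [sq, hTT]; norm_num
  have hne : (T 2 : LaurentPolynomial ℂ) - 1 ≠ 0 := by
    intro h
    rw [sub_eq_zero] at h
    rw [show (T 2 : LaurentPolynomial ℂ) = AddMonoidAlgebra.single 2 1 from rfl,
      ← single_zero_one_eq_one, AddMonoidAlgebra.single_inj] at h
    simp at h
  have hcancel : ∀ {a b : LaurentPolynomial ℂ}, (T 2 - 1) * a = (T 2 - 1) * b → a = b :=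
    fun h => mul_left_cancel₀ hne h
  -- divisibility
  have hdvd : ∀ k : ℤ, (T 2 - 1 : LaurentPolynomial ℂ) ∣ T (2 * k) - 1 := by
    have base : ∀ m : ℕ, (T 2 - 1 : LaurentPolynomial ℂ) ∣ T (2 * m) - 1 := by
      intro m
      have : (T (2 * m) : LaurentPolynomial ℂ) = (T 2) ^ m := by
        rw [T_pow 2 m]; congr 1; ring
      rw [this]
      simpa using sub_dvd_pow_sub_pow (T 2 : LaurentPolynomial ℂ) 1 m
    intro k
    rcases le_or_gt 0 k with hk | hk
    · obtain ⟨m, rfl⟩ := Int.eq_ofNat_of_zero_le hk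
      exact base m
    · obtain ⟨m, rfl⟩ : ∃ m : ℕ, k = -(m : ℤ) := by
        refine ⟨(-k).toNat, ?_⟩
        rw [Int.toNat_of_nonneg (by omega)]; ring
      have h1 := base m
      have h2 : (T (2 * -(m:ℤ)) : LaurentPolynomial ℂ) - 1 =
          (-(T (2 * -(m:ℤ)))) * (T (2 * (m:ℤ)) - 1) := by
        rw [mul_sub, mul_one, neg_mul, hTT, show 2 * -(m:ℤ) + 2 * (m:ℤ) = 0 by ring, T_zero]
        ring
      rw [h2]
      exact Dvd.dvd.mul_left h1 _
  -- existence and uniqueness of g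
  have hexu : ∀ f : LaurentPolynomial ℂ, ∃! g : LaurentPolynomial ℂ,
      (T 1 ^ 2 - 1) * g = s f - f := by
    intro f
    have hex : ∃ g : LaurentPolynomial ℂ, (T 2 - 1) * g = s f - f := by
      induction f using AddMonoidAlgebra.induction_linear with
      | zero => exact ⟨0, by simp⟩
      | add a b ha hb =>
        obtain ⟨g1, h1⟩ := ha; obtain ⟨g2, h2⟩ := hb
        exact ⟨g1 + g2, by rw [mul_add, h1, h2, map_add]; ring⟩
      | single n a =>
        have hsg : (AddMonoidAlgebra.single n a : LaurentPolynomial ℂ) = a • T n := by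
          rw [T, AddMonoidAlgebra.smul_single', mul_one]
        obtain ⟨g, hg⟩ := hdvd (-n)
        refine ⟨a • (T n * g), ?_⟩
        rw [hsg, map_smul, hs, mul_smul_comm, ← smul_sub]
        congr 1
        rw [show (T 2 - 1 : LaurentPolynomial ℂ) * (T n * g) = T n * ((T 2 - 1) * g) by ring,
          ← hg, mul_sub, mul_one, hTT, show n + 2 * -n = -n by ring]
    obtain ⟨g, hg⟩ := hex
    refine ⟨g, by rw [hsq]; exact hg, ?_⟩
    intro y hy
    rw [hsq] at hy
    exact hcancel (hy.trans hg.symm)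
  refine ⟨hexu, ?_⟩
  intro Top Yop hTop hYop
  choose D hD using fun f => (hexu f).exists
  have hUniq : ∀ f g : LaurentPolynomial ℂ, (T 2 - 1) * g = s f - f → g = D f := by
    intro f g h
    exact (hexu f).unique (by rw [hsq]; exact h) (hD f)
  have hD2 : ∀ f, (T 2 - 1) * D f = s f - f := fun f => by rw [← hsq]; exact hD f
  have hTopD : ∀ f, Top f = t2 • s f + (t2 - t2⁻¹) • D f := fun f => hTop f (D f) (hD f)
  -- linear map extensionality on the basis
  have hext : ∀ (φ ψ : LaurentPolynomial ℂ →ₗ[ℂ] LaurentPolynomial ℂ),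
      (∀ n : ℤ, φ (T n) = ψ (T n)) → ∀ f, φ f = ψ f := by
    intro φ ψ h f
    have : φ = ψ := AddMonoidAlgebra.lhom_ext' fun n => LinearMap.ext_ring (h n)
    rw [this]
  have hss : ∀ f, s (s f) = f := by
    intro f
    have := hext (s ∘ₗ s) LinearMap.id (fun n => by
      simp only [LinearMap.coe_comp, Function.comp_apply, hs, neg_neg, LinearMap.id_apply])
    simpa using this f
  have hsT : ∀ (n : ℤ) (f : LaurentPolynomial ℂ), s (T n * f) = T (-n) * s f := by
    intro n f
    have := hext (s ∘ₗ LinearMap.mulLeft ℂ (T n)) (LinearMap.mulLeft ℂ (T (-n)) ∘ₗ s)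
      (fun m => by
        simp only [LinearMap.coe_comp, Function.comp_apply, LinearMap.mulLeft_apply, hTT, hs,
          neg_add])
    simpa using this f
  have hpT : ∀ (n : ℤ) (f : LaurentPolynomial ℂ), p (T n * f) = q2 ^ n • (T n * p f) := by
    intro n f
    have := hext (p ∘ₗ LinearMap.mulLeft ℂ (T n)) (q2 ^ n • (LinearMap.mulLeft ℂ (T n) ∘ₗ p))
      (fun m => by
        simp only [LinearMap.coe_comp, Function.comp_apply, LinearMap.mulLeft_apply,
          LinearMap.smul_apply, hTT, hp, mul_smul_comm, smul_smul, ← zpow_add₀ hq2])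
    simpa using this f
  have hspsp : ∀ f, s (p (s (p f))) = f := by
    intro f
    have := hext (s ∘ₗ p ∘ₗ s ∘ₗ p) LinearMap.id (fun n => by
      simp only [LinearMap.coe_comp, Function.comp_apply, hp, map_smul, hs, smul_smul,
        LinearMap.id_apply, ← zpow_add₀ hq2, neg_neg]
      rw [show n + -n = 0 by ring, zpow_zero, one_smul])
    simpa using this f
  have hsmulC : ∀ (a : ℂ) (f : LaurentPolynomial ℂ), a • f = C a * f :=
    fun a f => by rw [Algebra.smul_def, ← C_eq_algebraMap]
  have hCt : (C t2 : LaurentPolynomial ℂ) * C t2⁻¹ = 1 := by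
    rw [← map_mul, mul_inv_cancel₀ ht2, map_one]
  have h22 : (T (-2) : LaurentPolynomial ℂ) * T 2 = 1 := by
    rw [hTT, show (-2 : ℤ) + 2 = 0 by ring, T_zero]
  have h21 : (T 2 : LaurentPolynomial ℂ) * T (-1) = T 1 := by
    rw [hTT]; norm_num
  have hDadd : ∀ f g, D (f + g) = D f + D g := fun f g =>
    (hUniq (f + g) (D f + D g) (by rw [mul_add, hD2, hD2, map_add]; ring)).symm
  have hDsmul : ∀ (a : ℂ) f, D (a • f) = a • D f := fun a f =>
    (hUniq _ _ (by rw [mul_smul_comm, hD2, map_smul, smul_sub])).symm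
  have hDs : ∀ f, D (s f) = -(D f) := fun f =>
    (hUniq _ _ (by rw [mul_neg, hD2, hss]; ring)).symm
  have hsD : ∀ f, s (D f) = T 2 * D f := by
    intro f
    apply hcancel
    have e0 : (T 2 - 1 : LaurentPolynomial ℂ) * D f = T 2 * D f - D f := by ring
    have e1 := congrArg s (hD2 f)
    rw [e0, map_sub, map_sub, hss, hsT] at e1
    linear_combination (-(T 2 : LaurentPolynomial ℂ)) * e1 - (T 2 : LaurentPolynomial ℂ) * hD2 f
      + s (D f) * h22
  have hDD : ∀ f, D (D f) = D f := fun f =>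
    (hUniq (D f) (D f) (by rw [hsD]; ring)).symm
  have hDX : ∀ h, D (T 1 * h) = T (-1) * D h - T (-1) * h := fun h =>
    (hUniq _ _ (by
      rw [hsT]
      linear_combination (T (-1) : LaurentPolynomial ℂ) * hD2 h - h * h21)).symm
  have hTadd : ∀ f g, Top (f + g) = Top f + Top g := by
    intro f g
    rw [hTopD (f + g), hTopD f, hTopD g, map_add, hDadd]
    match_scalars <;> ring
  have hTsmul : ∀ (a : ℂ) f, Top (a • f) = a • Top f := by
    intro a f
    rw [hTopD (a • f), hTopD f, map_smul, hDsmul]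
    match_scalars <;> ring
  have hTT2 : ∀ f, Top (Top f) = (t2 - t2⁻¹) • Top f + f := by
    intro f
    have e1 : s (Top f) = t2 • f + (t2 - t2⁻¹) • (T 2 * D f) := by
      rw [hTopD f, map_add, map_smul, map_smul, hss, hsD]
    have e2 : D (Top f) = t2 • (-(D f)) + (t2 - t2⁻¹) • D f := by
      rw [hTopD f, hDadd, hDsmul, hDsmul, hDs, hDD]
    rw [hTopD (Top f), e1, e2, hTopD f]
    simp only [hsmulC, map_sub]
    linear_combination (C t2 * (C t2 - C t2⁻¹) : LaurentPolynomial ℂ) * hD2 f + f * hCt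
  have hTX : ∀ f, Top (T 1 * Top f) = T (-1) * f := by
    intro f
    have h1 := hTT2 f
    rw [hTopD (Top f)] at h1
    rw [hTopD (T 1 * Top f), hsT, hDX]
    simp only [hsmulC, map_sub] at h1 ⊢
    linear_combination (T (-1) : LaurentPolynomial ℂ) * h1
  have hquad : ∀ f, Top (Top f + t2⁻¹ • f) = t2 • (Top f + t2⁻¹ • f) := by
    intro f
    rw [hTadd, hTsmul, hTT2 f]
    match_scalars
    · ring
    · field_simp
  have hTsub : ∀ f g, Top (f - g) = Top f - Top g := by
    intro f g
    rw [sub_eq_add_neg, hTadd, ← neg_one_smul ℂ g, hTsmul, neg_one_smul, ← sub_eq_add_neg]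
  have hTbij : Function.Bijective Top := by
    rw [Function.bijective_iff_has_inverse]
    refine ⟨fun g => Top g - (t2 - t2⁻¹) • g, fun f => ?_, fun f => ?_⟩
    · show Top (Top f) - (t2 - t2⁻¹) • Top f = f
      rw [hTT2 f]; abel
    · show Top (Top f - (t2 - t2⁻¹) • f) = f
      rw [hTsub, hTsmul, hTT2 f]; abel
  have hsbij : Function.Bijective ⇑s := Function.Involutive.bijective hss
  have hspbij : Function.Bijective (⇑s ∘ ⇑p) :=
    Function.Involutive.bijective (fun f => hspsp f)
  have hpbij : Function.Bijective ⇑p := by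
    have hpe : ⇑p = ⇑s ∘ (⇑s ∘ ⇑p) := by funext x; exact (hss (p x)).symm
    rw [hpe]; exact hsbij.comp hspbij
  have hYbij : Function.Bijective Yop := by
    have : Yop = ⇑s ∘ ⇑p ∘ Top := by funext x; exact hYop x
    rw [this]; exact hsbij.comp (hpbij.comp hTbij)
  have hrelc : ∀ f g, Yop g = Top f → Top g = Yop f := by
    intro f g hfg
    have h1 : s (p (Yop g)) = s (p (Top f)) := by rw [hfg]
    rw [hYop g, hspsp] at h1
    rw [h1, ← hYop f]
  have hreld : ∀ f, T (-1) * Yop (T 1 * Top (Top f)) = Yop (q2⁻¹ • f) := by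
    intro f
    rw [hYop (T 1 * Top (Top f)), hYop (q2⁻¹ • f), hTX (Top f), hTsmul, map_smul, map_smul,
      hpT (-1) (Top f), map_smul, hsT (-1) (p (Top f)), neg_neg, mul_smul_comm, ← mul_assoc,
      hTT, show (-1 : ℤ) + 1 = 0 by ring, T_zero, one_mul]
    congr 1
    rw [zpow_neg, zpow_one]
  exact ⟨hTbij, hYbij, hquad, hTX, hrelc, hreld⟩
end
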